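/- arXiv:2005.05548 — 4 statements merged into one kernel-verified Lean document; each statement's English description precedes it below -/
import Mathlib

section
/- With V = (GF(2))^30 and Z₁, Z₂, Z₃ the three 6-dimensional subspaces of linear functionals given by the cache construction of Table II (Z₂ = g(Z₁), Z₃ = g(Z₂) for the coordinate permutation g), the sum Z₁ + Z₂ + Z₃ has dimension 18, i.e., the three caches are linearly independent: dim(Z₁ + Z₂ + Z₃) = dim Z₁ + dim Z₂ + dim Z₃. -/
/-- Standard basis functionals on `(GF(2))^30`; coordinates `0–9` are `A₁,…,A₁₀`,
`10–19` are `B₁,…,B₁₀`, `20–29` are `C₁,…,C₁₀`. -/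
def e (i : Fin 30) : Fin 30 → ZMod 2 := Pi.single i 1

/-- The cache of User 1 (Table II). -/
noncomputable def Z₁ : Submodule (ZMod 2) (Fin 30 → ZMod 2) :=
  Submodule.span (ZMod 2)
    {e 0 + e 2 + e 3 + e 11 + e 19,
     e 10 + e 12 + e 13 + e 21 + e 29,
     e 20 + e 22 + e 23 + e 1 + e 9,
     e 1 + e 10,
     e 11 + e 20,
     e 21 + e 0}

/-- The cache of User 2 (Table II): `Z₂ = g(Z₁)`. -/
noncomputable def Z₂ : Submodule (ZMod 2) (Fin 30 → ZMod 2) :=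
  Submodule.span (ZMod 2)
    {e 3 + e 5 + e 6 + e 14 + e 19,
     e 13 + e 15 + e 16 + e 24 + e 29,
     e 23 + e 25 + e 26 + e 4 + e 9,
     e 4 + e 13,
     e 14 + e 23,
     e 24 + e 3}

/-- The cache of User 3 (Table II): `Z₃ = g(Z₂)`. -/
noncomputable def Z₃ : Submodule (ZMod 2) (Fin 30 → ZMod 2) :=
  Submodule.span (ZMod 2)
    {e 6 + e 8 + e 0 + e 17 + e 19,
     e 16 + e 18 + e 10 + e 27 + e 29,
     e 26 + e 28 + e 20 + e 7 + e 9,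
     e 7 + e 16,
     e 17 + e 26,
     e 27 + e 6}

def v : Fin 18 → (Fin 30 → ZMod 2) :=
  ![e 0 + e 2 + e 3 + e 11 + e 19,
    e 10 + e 12 + e 13 + e 21 + e 29,
    e 20 + e 22 + e 23 + e 1 + e 9,
    e 1 + e 10,
    e 11 + e 20,
    e 21 + e 0,
    e 3 + e 5 + e 6 + e 14 + e 19,
    e 13 + e 15 + e 16 + e 24 + e 29,
    e 23 + e 25 + e 26 + e 4 + e 9,
    e 4 + e 13,
    e 14 + e 23,
    e 24 + e 3,
    e 6 + e 8 + e 0 + e 17 + e 19,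
    e 16 + e 18 + e 10 + e 27 + e 29,
    e 26 + e 28 + e 20 + e 7 + e 9,
    e 7 + e 16,
    e 17 + e 26,
    e 27 + e 6]

def D : Matrix (Fin 18) (Fin 30) (ZMod 2) :=
  ![![0,0,1,0,0,0,0,0,0,0,0,0,0,0,0,0,0,0,0,0,0,0,0,0,0,0,0,0,0,0],
    ![0,0,0,0,0,0,0,0,0,0,0,0,1,0,0,0,0,0,0,0,0,0,0,0,0,0,0,0,0,0],
    ![0,1,0,0,0,0,0,0,0,0,1,0,1,0,0,0,0,0,1,0,0,0,0,0,0,0,0,0,0,0],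
    ![0,0,0,0,0,0,0,0,0,0,1,0,1,0,0,0,0,0,1,0,0,0,0,0,0,0,0,0,0,0],
    ![0,0,1,0,0,0,0,0,0,0,0,1,0,0,0,0,0,0,0,0,0,0,0,0,0,0,0,0,0,0],
    ![1,0,1,0,0,0,0,0,1,0,0,0,0,0,0,0,0,0,0,0,0,0,0,0,0,0,0,0,0,0],
    ![0,0,0,0,0,1,0,0,0,0,0,0,0,0,0,0,0,0,0,0,0,0,0,0,0,0,0,0,0,0],
    ![0,0,0,0,0,0,0,0,0,0,0,0,0,0,0,1,0,0,0,0,0,0,0,0,0,0,0,0,0,0],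
    ![0,0,0,0,1,0,0,0,0,0,0,0,1,1,0,1,0,0,0,0,0,0,0,0,0,0,0,0,0,0],
    ![0,0,0,0,0,0,0,0,0,0,0,0,1,1,0,1,0,0,0,0,0,0,0,0,0,0,0,0,0,0],
    ![0,0,0,0,0,1,0,0,0,0,0,0,0,0,1,0,0,0,0,0,0,0,0,0,0,0,0,0,0,0],
    ![0,0,1,1,0,1,0,0,0,0,0,0,0,0,0,0,0,0,0,0,0,0,0,0,0,0,0,0,0,0],
    ![0,0,0,0,0,0,0,0,1,0,0,0,0,0,0,0,0,0,0,0,0,0,0,0,0,0,0,0,0,0],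
    ![0,0,0,0,0,0,0,0,0,0,0,0,0,0,0,0,0,0,1,0,0,0,0,0,0,0,0,0,0,0],
    ![0,1,0,0,1,0,0,0,0,1,1,0,0,1,0,1,0,0,1,0,0,0,0,0,0,0,0,0,0,0],
    ![0,1,0,0,1,0,0,1,0,1,1,0,0,1,0,1,0,0,1,0,0,0,0,0,0,0,0,0,0,0],
    ![0,0,0,0,0,0,0,0,1,0,0,0,0,0,0,0,0,1,0,0,0,0,0,0,0,0,0,0,0,0],
    ![0,0,0,0,0,1,1,0,1,0,0,0,0,0,0,0,0,0,0,0,0,0,0,0,0,0,0,0,0,0]]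

set_option maxRecDepth 40000 in
lemma hD : ∀ i, D.mulVec (v i) = Pi.single i (1 : ZMod 2) := by decide

lemma hli : LinearIndependent (ZMod 2) v := by
  have hb : LinearIndependent (ZMod 2) (fun i : Fin 18 => Pi.single i (1 : ZMod 2)) := by
    have h := (Pi.basisFun (ZMod 2) (Fin 18)).linearIndependent
    have he : ⇑(Pi.basisFun (ZMod 2) (Fin 18)) = fun i : Fin 18 => Pi.single i (1 : ZMod 2) := by
      funext i; simp [Pi.basisFun_apply]
    rwa [he] at h
  refine LinearIndependent.of_comp (Matrix.mulVecLin D) ?_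
  have : (Matrix.mulVecLin D) ∘ v = fun i : Fin 18 => Pi.single i (1 : ZMod 2) := by
    funext i; simpa using hD i
  rw [this]; exact hb

def u₁ : Fin 6 → (Fin 30 → ZMod 2) :=
  ![e 0 + e 2 + e 3 + e 11 + e 19,
    e 10 + e 12 + e 13 + e 21 + e 29,
    e 20 + e 22 + e 23 + e 1 + e 9,
    e 1 + e 10,
    e 11 + e 20,
    e 21 + e 0]

def u₂ : Fin 6 → (Fin 30 → ZMod 2) :=
  ![e 3 + e 5 + e 6 + e 14 + e 19,
    e 13 + e 15 + e 16 + e 24 + e 29,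
    e 23 + e 25 + e 26 + e 4 + e 9,
    e 4 + e 13,
    e 14 + e 23,
    e 24 + e 3]

def u₃ : Fin 6 → (Fin 30 → ZMod 2) :=
  ![e 6 + e 8 + e 0 + e 17 + e 19,
    e 16 + e 18 + e 10 + e 27 + e 29,
    e 26 + e 28 + e 20 + e 7 + e 9,
    e 7 + e 16,
    e 17 + e 26,
    e 27 + e 6]

def f₁ : Fin 6 → Fin 18 := fun i => ⟨i.1, by omega⟩
def f₂ : Fin 6 → Fin 18 := fun i => ⟨i.1 + 6, by omega⟩
def f₃ : Fin 6 → Fin 18 := fun i => ⟨i.1 + 12, by omega⟩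

lemma hu₁ : u₁ = v ∘ f₁ := by funext i; fin_cases i <;> rfl
lemma hu₂ : u₂ = v ∘ f₂ := by funext i; fin_cases i <;> rfl
lemma hu₃ : u₃ = v ∘ f₃ := by funext i; fin_cases i <;> rfl

lemma hli₁ : LinearIndependent (ZMod 2) u₁ := by
  rw [hu₁]; exact hli.comp f₁ (by decide)
lemma hli₂ : LinearIndependent (ZMod 2) u₂ := by
  rw [hu₂]; exact hli.comp f₂ (by decide)
lemma hli₃ : LinearIndependent (ZMod 2) u₃ := by
  rw [hu₃]; exact hli.comp f₃ (by decide)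

lemma hZ₁ : Z₁ = Submodule.span (ZMod 2) (Set.range u₁) := by
  rw [Z₁]; congr 1
  ext x; simp [u₁, Matrix.range_cons, Matrix.range_empty]; tauto

lemma hZ₂ : Z₂ = Submodule.span (ZMod 2) (Set.range u₂) := by
  rw [Z₂]; congr 1
  ext x; simp [u₂, Matrix.range_cons, Matrix.range_empty]; tauto

lemma hZ₃ : Z₃ = Submodule.span (ZMod 2) (Set.range u₃) := by
  rw [Z₃]; congr 1
  ext x; simp [u₃, Matrix.range_cons, Matrix.range_empty]; tauto

lemma hsup : Z₁ ⊔ Z₂ ⊔ Z₃ = Submodule.span (ZMod 2) (Set.range v) := by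
  rw [hZ₁, hZ₂, hZ₃, ← Submodule.span_union, ← Submodule.span_union]
  congr 1
  rw [hu₁, hu₂, hu₃]
  ext x
  constructor
  · rintro ((⟨i, rfl⟩ | ⟨i, rfl⟩) | ⟨i, rfl⟩)
    · exact ⟨f₁ i, rfl⟩
    · exact ⟨f₂ i, rfl⟩
    · exact ⟨f₃ i, rfl⟩
  · rintro ⟨i, rfl⟩
    by_cases h6 : i.1 < 6
    · exact Or.inl (Or.inl ⟨⟨i.1, h6⟩, congrArg v (Fin.ext rfl)⟩)
    · by_cases h12 : i.1 < 12
      · exact Or.inl (Or.inr ⟨⟨i.1 - 6, by omega⟩, congrArg v (Fin.ext (show i.1 - 6 + 6 = i.1 by omega))⟩)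
      · exact Or.inr ⟨⟨i.1 - 12, by omega⟩, congrArg v (Fin.ext (show i.1 - 12 + 12 = i.1 by omega))⟩


theorem stmt_13 :
    Module.finrank (ZMod 2) ↥(Z₁ ⊔ Z₂ ⊔ Z₃) = 18 ∧
      Module.finrank (ZMod 2) ↥(Z₁ ⊔ Z₂ ⊔ Z₃) =
        Module.finrank (ZMod 2) ↥Z₁ + Module.finrank (ZMod 2) ↥Z₂ +
          Module.finrank (ZMod 2) ↥Z₃ := by
  have h18 : Module.finrank (ZMod 2) ↥(Z₁ ⊔ Z₂ ⊔ Z₃) = 18 := by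
    rw [hsup, finrank_span_eq_card hli]; simp
  have h1 : Module.finrank (ZMod 2) ↥Z₁ = 6 := by
    rw [hZ₁, finrank_span_eq_card hli₁]; simp
  have h2 : Module.finrank (ZMod 2) ↥Z₂ = 6 := by
    rw [hZ₂, finrank_span_eq_card hli₂]; simp
  have h3 : Module.finrank (ZMod 2) ↥Z₃ = 6 := by
    rw [hZ₃, finrank_span_eq_card hli₃]; simp
  exact ⟨h18, by rw [h18, h1, h2, h3]⟩
end

section
/- With V = (GF(2))^30, Z₁ the 6-dimensional cache subspace of User 1 from Table II, and W₁ the 10-dimensional coordinate subspace spanned by the functionals A₁,…,A₁₀, the sum Z₁ + W₁ has dimension 16. -/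
/-- File `A`: the coordinate subspace spanned by `A₁,…,A₁₀`. -/
noncomputable def W₁ : Submodule (ZMod 2) (Fin 30 → ZMod 2) :=
  Submodule.span (ZMod 2) {v | ∃ i : Fin 30, i.val < 10 ∧ v = e i}

/-- The 16 spanning vectors: `A₁,…,A₁₀` together with the six cache generators. -/
noncomputable def bb : Fin 16 → Fin 30 → ZMod 2 :=
  ![e 0, e 1, e 2, e 3, e 4, e 5, e 6, e 7, e 8, e 9,
    e 0 + e 2 + e 3 + e 11 + e 19,
    e 10 + e 12 + e 13 + e 21 + e 29,
    e 20 + e 22 + e 23 + e 1 + e 9,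
    e 1 + e 10,
    e 11 + e 20,
    e 21 + e 0]

/-- A left inverse witnessing linear independence of `bb`. -/
def MM : Matrix (Fin 16) (Fin 30) (ZMod 2) := Matrix.of
  ![![1,0,0,0,0,0,0,0,0,0,0,0,0,0,0,0,0,0,0,1,0,1,0,0,0,0,0,0,0,1],
    ![0,1,0,0,0,0,0,0,0,0,1,0,0,0,0,0,0,0,0,0,0,0,1,0,0,0,0,0,0,1],
    ![0,0,1,0,0,0,0,0,0,0,0,0,0,0,0,0,0,0,0,1,0,0,0,0,0,0,0,0,0,0],
    ![0,0,0,1,0,0,0,0,0,0,0,0,0,0,0,0,0,0,0,1,0,0,0,0,0,0,0,0,0,0],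
    ![0,0,0,0,1,0,0,0,0,0,0,0,0,0,0,0,0,0,0,0,0,0,0,0,0,0,0,0,0,0],
    ![0,0,0,0,0,1,0,0,0,0,0,0,0,0,0,0,0,0,0,0,0,0,0,0,0,0,0,0,0,0],
    ![0,0,0,0,0,0,1,0,0,0,0,0,0,0,0,0,0,0,0,0,0,0,0,0,0,0,0,0,0,0],
    ![0,0,0,0,0,0,0,1,0,0,0,0,0,0,0,0,0,0,0,0,0,0,0,0,0,0,0,0,0,0],
    ![0,0,0,0,0,0,0,0,1,0,0,0,0,0,0,0,0,0,0,0,0,0,0,0,0,0,0,0,0,0],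
    ![0,0,0,0,0,0,0,0,0,1,0,0,0,0,0,0,0,0,0,0,0,0,1,0,0,0,0,0,0,0],
    ![0,0,0,0,0,0,0,0,0,0,0,0,0,0,0,0,0,0,0,1,0,0,0,0,0,0,0,0,0,0],
    ![0,0,0,0,0,0,0,0,0,0,0,0,0,0,0,0,0,0,0,0,0,0,0,0,0,0,0,0,0,1],
    ![0,0,0,0,0,0,0,0,0,0,0,0,0,0,0,0,0,0,0,0,0,0,1,0,0,0,0,0,0,0],
    ![0,0,0,0,0,0,0,0,0,0,1,0,0,0,0,0,0,0,0,0,0,0,0,0,0,0,0,0,0,1],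
    ![0,0,0,0,0,0,0,0,0,0,0,0,0,0,0,0,0,0,0,0,1,0,1,0,0,0,0,0,0,0],
    ![0,0,0,0,0,0,0,0,0,0,0,0,0,0,0,0,0,0,0,0,0,1,0,0,0,0,0,0,0,1]]

set_option maxRecDepth 100000 in
lemma hMM : ∀ i : Fin 16, ∀ j : Fin 16,
    MM.mulVec (bb i) j = (Pi.single i 1 : Fin 16 → ZMod 2) j := by
  decide

lemma bb_indep : LinearIndependent (ZMod 2) bb := by
  apply LinearIndependent.of_comp MM.mulVecLin
  have : (MM.mulVecLin ∘ bb) = fun i => (Pi.single i 1 : Fin 16 → ZMod 2) := by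
    funext i j
    simpa [Matrix.mulVecLin_apply] using hMM i j
  rw [this]
  have h2 : (fun i => (Pi.single i 1 : Fin 16 → ZMod 2)) = ⇑(Pi.basisFun (ZMod 2) (Fin 16)) := by
    funext i
    simp [Pi.basisFun_apply]
  rw [h2]
  exact (Pi.basisFun (ZMod 2) (Fin 16)).linearIndependent

lemma setW : {v : Fin 30 → ZMod 2 | ∃ i : Fin 30, i.val < 10 ∧ v = e i} =
    {e 0, e 1, e 2, e 3, e 4, e 5, e 6, e 7, e 8, e 9} := by
  ext v
  constructor
  · rintro ⟨i, hi, rfl⟩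
    fin_cases i <;> simp_all
  · intro hv
    simp only [Set.mem_insert_iff, Set.mem_singleton_iff] at hv
    rcases hv with h|h|h|h|h|h|h|h|h|h <;> subst h <;>
      [exact ⟨0, by decide, rfl⟩; exact ⟨1, by decide, rfl⟩; exact ⟨2, by decide, rfl⟩;
       exact ⟨3, by decide, rfl⟩; exact ⟨4, by decide, rfl⟩; exact ⟨5, by decide, rfl⟩;
       exact ⟨6, by decide, rfl⟩; exact ⟨7, by decide, rfl⟩; exact ⟨8, by decide, rfl⟩;
       exact ⟨9, by decide, rfl⟩]

lemma span_eq : Z₁ ⊔ W₁ = Submodule.span (ZMod 2) (Set.range bb) := by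
  rw [Z₁, W₁, ← Submodule.span_union, setW]
  congr 1
  simp only [bb, Matrix.range_cons, Matrix.range_empty, Set.union_empty]
  ext v
  simp only [Set.mem_union, Set.mem_insert_iff, Set.mem_singleton_iff]
  tauto

theorem stmt_14 : Module.finrank (ZMod 2) ↥(Z₁ ⊔ W₁) = 16 := by
  rw [span_eq, finrank_span_eq_card bb_indep, Fintype.card_fin]
end

section
/- Let V = (GF(2))^30, let Z₁ be the cache subspace of User 1 from Table II, and let X be the 15-dimensional span of the delivery message X^{ABC} functionals from Table V (15 functionals including B₂+B₁₀, C₅+C₁₀, A₈+A₁₀, A₄+A₆+A₇, B₇+B₉+B₁, C₁+C₃+C₄, A₇, B₁, C₄, A₅, B₈, C₂, A₁+A₉+B₂+C₁, B₃+B₄+C₅+A₄, C₆+C₇+A₈+B₇). Then the coordinate subspace W₁ = span{A₁,…,A₁₀} is contained in Z₁ + X. -/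
/-- The delivery message `X^{ABC}` (Table V): span of its 15 functionals. -/
noncomputable def XABC : Submodule (ZMod 2) (Fin 30 → ZMod 2) :=
  Submodule.span (ZMod 2)
    {e 11 + e 19,              -- B₂+B₁₀
     e 24 + e 29,              -- C₅+C₁₀
     e 7 + e 9,                -- A₈+A₁₀
     e 3 + e 5 + e 6,          -- A₄+A₆+A₇
     e 16 + e 18 + e 10,       -- B₇+B₉+B₁
     e 20 + e 22 + e 23,       -- C₁+C₃+C₄
     e 6,                      -- A₇
     e 10,                     -- B₁
     e 23,                     -- C₄
     e 4,                      -- A₅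
     e 17,                     -- B₈
     e 21,                     -- C₂
     e 0 + e 8 + e 11 + e 20,  -- A₁+A₉+B₂+C₁
     e 12 + e 13 + e 24 + e 3, -- B₃+B₄+C₅+A₄
     e 25 + e 26 + e 7 + e 16} -- C₆+C₇+A₈+B₇

theorem stmt_15 : W₁ ≤ Z₁ ⊔ XABC := by
  have hZ : ∀ v ∈ ({e 0 + e 2 + e 3 + e 11 + e 19,
     e 10 + e 12 + e 13 + e 21 + e 29,
     e 20 + e 22 + e 23 + e 1 + e 9,
     e 1 + e 10, e 11 + e 20, e 21 + e 0} : Set (Fin 30 → ZMod 2)),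
      v ∈ Z₁ ⊔ XABC := fun v hv =>
    Submodule.mem_sup_left (Submodule.subset_span hv)
  have hX : ∀ v ∈ ({e 11 + e 19, e 24 + e 29, e 7 + e 9,
     e 3 + e 5 + e 6, e 16 + e 18 + e 10, e 20 + e 22 + e 23,
     e 6, e 10, e 23, e 4, e 17, e 21,
     e 0 + e 8 + e 11 + e 20, e 12 + e 13 + e 24 + e 3,
     e 25 + e 26 + e 7 + e 16} : Set (Fin 30 → ZMod 2)),
      v ∈ Z₁ ⊔ XABC := fun v hv =>
    Submodule.mem_sup_right (Submodule.subset_span hv)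
  have z1 := hZ (e 0 + e 2 + e 3 + e 11 + e 19) (Set.mem_insert _ _)
  have z2 := hZ (e 10 + e 12 + e 13 + e 21 + e 29) (Set.mem_insert_of_mem _ (Set.mem_insert _ _))
  have z3 := hZ (e 20 + e 22 + e 23 + e 1 + e 9) (Set.mem_insert_of_mem _ (Set.mem_insert_of_mem _ (Set.mem_insert _ _)))
  have z4 := hZ (e 1 + e 10) (Set.mem_insert_of_mem _ (Set.mem_insert_of_mem _ (Set.mem_insert_of_mem _ (Set.mem_insert _ _))))
  have z5 := hZ (e 11 + e 20) (Set.mem_insert_of_mem _ (Set.mem_insert_of_mem _ (Set.mem_insert_of_mem _ (Set.mem_insert_of_mem _ (Set.mem_insert _ _)))))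
  have z6 := hZ (e 21 + e 0) (Set.mem_insert_of_mem _ (Set.mem_insert_of_mem _ (Set.mem_insert_of_mem _ (Set.mem_insert_of_mem _ (Set.mem_insert_of_mem _ (Set.mem_singleton _))))))
  have x1 := hX (e 11 + e 19) (Set.mem_insert _ _)
  have x2 := hX (e 24 + e 29) (Set.mem_insert_of_mem _ (Set.mem_insert _ _))
  have x3 := hX (e 7 + e 9) (Set.mem_insert_of_mem _ (Set.mem_insert_of_mem _ (Set.mem_insert _ _)))
  have x4 := hX (e 3 + e 5 + e 6) (Set.mem_insert_of_mem _ (Set.mem_insert_of_mem _ (Set.mem_insert_of_mem _ (Set.mem_insert _ _))))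
  have x6 := hX (e 20 + e 22 + e 23) (Set.mem_insert_of_mem _ (Set.mem_insert_of_mem _ (Set.mem_insert_of_mem _ (Set.mem_insert_of_mem _ (Set.mem_insert_of_mem _ (Set.mem_insert _ _))))))
  have x7 := hX (e 6) (Set.mem_insert_of_mem _ (Set.mem_insert_of_mem _ (Set.mem_insert_of_mem _ (Set.mem_insert_of_mem _ (Set.mem_insert_of_mem _ (Set.mem_insert_of_mem _ (Set.mem_insert _ _)))))))
  have x8 := hX (e 10) (Set.mem_insert_of_mem _ (Set.mem_insert_of_mem _ (Set.mem_insert_of_mem _ (Set.mem_insert_of_mem _ (Set.mem_insert_of_mem _ (Set.mem_insert_of_mem _ (Set.mem_insert_of_mem _ (Set.mem_insert _ _))))))))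
  have x10 := hX (e 4) (Set.mem_insert_of_mem _ (Set.mem_insert_of_mem _ (Set.mem_insert_of_mem _ (Set.mem_insert_of_mem _ (Set.mem_insert_of_mem _ (Set.mem_insert_of_mem _ (Set.mem_insert_of_mem _ (Set.mem_insert_of_mem _ (Set.mem_insert_of_mem _ (Set.mem_insert _ _))))))))))
  have x12 := hX (e 21) (Set.mem_insert_of_mem _ (Set.mem_insert_of_mem _ (Set.mem_insert_of_mem _ (Set.mem_insert_of_mem _ (Set.mem_insert_of_mem _ (Set.mem_insert_of_mem _ (Set.mem_insert_of_mem _ (Set.mem_insert_of_mem _ (Set.mem_insert_of_mem _ (Set.mem_insert_of_mem _ (Set.mem_insert_of_mem _ (Set.mem_insert _ _))))))))))))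
  have x13 := hX (e 0 + e 8 + e 11 + e 20) (Set.mem_insert_of_mem _ (Set.mem_insert_of_mem _ (Set.mem_insert_of_mem _ (Set.mem_insert_of_mem _ (Set.mem_insert_of_mem _ (Set.mem_insert_of_mem _ (Set.mem_insert_of_mem _ (Set.mem_insert_of_mem _ (Set.mem_insert_of_mem _ (Set.mem_insert_of_mem _ (Set.mem_insert_of_mem _ (Set.mem_insert_of_mem _ (Set.mem_insert _ _)))))))))))))
  have x14 := hX (e 12 + e 13 + e 24 + e 3) (Set.mem_insert_of_mem _ (Set.mem_insert_of_mem _ (Set.mem_insert_of_mem _ (Set.mem_insert_of_mem _ (Set.mem_insert_of_mem _ (Set.mem_insert_of_mem _ (Set.mem_insert_of_mem _ (Set.mem_insert_of_mem _ (Set.mem_insert_of_mem _ (Set.mem_insert_of_mem _ (Set.mem_insert_of_mem _ (Set.mem_insert_of_mem _ (Set.mem_insert_of_mem _ (Set.mem_insert _ _))))))))))))))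
  rw [W₁, Submodule.span_le]
  rintro v ⟨i, hi, rfl⟩
  have h0 : e (0:Fin 30) ∈ Z₁ ⊔ XABC := by
    have : e (0:Fin 30) = (e 21 + e 0) + e 21 := by decide
    rw [this]; exact add_mem z6 x12
  have h1 : e (1:Fin 30) ∈ Z₁ ⊔ XABC := by
    have : e (1:Fin 30) = (e 1 + e 10) + e 10 := by decide
    rw [this]; exact add_mem z4 x8
  have h3 : e (3:Fin 30) ∈ Z₁ ⊔ XABC := by
    have : e (3:Fin 30) = (e 10 + e 12 + e 13 + e 21 + e 29) + (e 24 + e 29)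
        + e 10 + e 21 + (e 12 + e 13 + e 24 + e 3) := by decide
    rw [this]; exact add_mem (add_mem (add_mem (add_mem z2 x2) x8) x12) x14
  have h9 : e (9:Fin 30) ∈ Z₁ ⊔ XABC := by
    have : e (9:Fin 30) = (e 20 + e 22 + e 23 + e 1 + e 9) + (e 1 + e 10)
        + (e 20 + e 22 + e 23) + e 10 := by decide
    rw [this]; exact add_mem (add_mem (add_mem z3 z4) x6) x8
  fin_cases i
  · exact h0
  · exact h1
  · -- A₃
    have : e (2:Fin 30) = (e 0 + e 2 + e 3 + e 11 + e 19)
        + (e 10 + e 12 + e 13 + e 21 + e 29) + (e 21 + e 0)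
        + (e 11 + e 19) + (e 24 + e 29) + e 10
        + (e 12 + e 13 + e 24 + e 3) := by decide
    exact Set.mem_of_eq_of_mem this <| add_mem (add_mem (add_mem (add_mem (add_mem (add_mem z1 z2) z6) x1) x2) x8) x14
  · exact h3
  · exact x10
  · -- A₆
    have : e (5:Fin 30) = e 3 + (e 3 + e 5 + e 6) + e 6 := by decide
    exact Set.mem_of_eq_of_mem this <| add_mem (add_mem h3 x4) x7
  · exact x7
  · -- A₈
    have : e (7:Fin 30) = (e 7 + e 9) + e 9 := by decide
    exact Set.mem_of_eq_of_mem this <| add_mem x3 h9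
  · -- A₉
    have : e (8:Fin 30) = (e 11 + e 20) + (e 21 + e 0) + e 21
        + (e 0 + e 8 + e 11 + e 20) := by decide
    exact Set.mem_of_eq_of_mem this <| add_mem (add_mem (add_mem z5 z6) x12) x13
  · exact h9
  all_goals exact absurd hi (by decide)
end

section
/- Over GF(2), in the scheme of Tables II and VI for demand (A,B,B): User 1 can decode file A, i.e., the coordinate subspace span{A₁,…,A₁₀} is contained in the span of Z₁'s six cache functionals together with the 15 delivery functionals of X^{ABB} (namely B₂+B₁₀, A₄+A₆+A₇, A₇+A₉+A₁, B₃+B₄, A₅+C₁₀+A₄, A₈+C₁₀+A₇, A₁₀, B₁₀, C₁₀, B₁, A₅, A₈, B₄+B₇, B₆+B₉, B₅+B₈). -/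
/-- The delivery message `X^{ABB}` (Table VI): span of its 15 functionals. -/
noncomputable def XABB : Submodule (ZMod 2) (Fin 30 → ZMod 2) :=
  Submodule.span (ZMod 2)
    {e 11 + e 19,        -- B₂+B₁₀
     e 3 + e 5 + e 6,    -- A₄+A₆+A₇
     e 6 + e 8 + e 0,    -- A₇+A₉+A₁
     e 12 + e 13,        -- B₃+B₄
     e 4 + e 29 + e 3,   -- A₅+C₁₀+A₄
     e 7 + e 29 + e 6,   -- A₈+C₁₀+A₇
     e 9,                -- A₁₀
     e 19,               -- B₁₀
     e 29,               -- C₁₀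
     e 10,               -- B₁
     e 4,                -- A₅
     e 7,                -- A₈
     e 13 + e 16,        -- B₄+B₇
     e 15 + e 18,        -- B₆+B₉
     e 14 + e 17}        -- B₅+B₈

theorem stmt_18 : W₁ ≤ Z₁ ⊔ XABB := by
  rw [W₁, Submodule.span_le]
  rintro v ⟨i, hi, rfl⟩
  set S := Z₁ ⊔ XABB with hS
  have hZ : ∀ w ∈ ({e 0 + e 2 + e 3 + e 11 + e 19,
     e 10 + e 12 + e 13 + e 21 + e 29,
     e 20 + e 22 + e 23 + e 1 + e 9,
     e 1 + e 10, e 11 + e 20, e 21 + e 0} : Set (Fin 30 → ZMod 2)), w ∈ S :=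
    fun w hw => Submodule.mem_sup_left (Submodule.subset_span hw)
  have hX : ∀ w ∈ ({e 11 + e 19, e 3 + e 5 + e 6, e 6 + e 8 + e 0, e 12 + e 13,
     e 4 + e 29 + e 3, e 7 + e 29 + e 6, e 9, e 19, e 29, e 10, e 4, e 7,
     e 13 + e 16, e 15 + e 18, e 14 + e 17} : Set (Fin 30 → ZMod 2)), w ∈ S :=
    fun w hw => Submodule.mem_sup_right (Submodule.subset_span hw)
  have hg1 : e 0 + e 2 + e 3 + e 11 + e 19 ∈ S := hZ _ (Set.mem_insert _ _)
  have hg2 : e 10 + e 12 + e 13 + e 21 + e 29 ∈ S := hZ _ (Set.mem_insert_of_mem _ (Set.mem_insert _ _))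
  have hg4 : e 1 + e 10 ∈ S := hZ _ (Set.mem_insert_of_mem _ (Set.mem_insert_of_mem _ (Set.mem_insert_of_mem _ (Set.mem_insert _ _))))
  have hg6 : e 21 + e 0 ∈ S := hZ _ (Set.mem_insert_of_mem _ (Set.mem_insert_of_mem _ (Set.mem_insert_of_mem _ (Set.mem_insert_of_mem _ (Set.mem_insert_of_mem _ rfl)))))
  have hd1 : e 11 + e 19 ∈ S := hX _ (Set.mem_insert _ _)
  have hd2 : e 3 + e 5 + e 6 ∈ S := hX _ (Set.mem_insert_of_mem _ (Set.mem_insert _ _))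
  have hd3 : e 6 + e 8 + e 0 ∈ S := hX _ (Set.mem_insert_of_mem _ (Set.mem_insert_of_mem _ (Set.mem_insert _ _)))
  have hd4 : e 12 + e 13 ∈ S := hX _ (Set.mem_insert_of_mem _ (Set.mem_insert_of_mem _ (Set.mem_insert_of_mem _ (Set.mem_insert _ _))))
  have hd5 : e 4 + e 29 + e 3 ∈ S := hX _ (Set.mem_insert_of_mem _ (Set.mem_insert_of_mem _ (Set.mem_insert_of_mem _ (Set.mem_insert_of_mem _ (Set.mem_insert _ _)))))
  have hd6 : e 7 + e 29 + e 6 ∈ S := hX _ (Set.mem_insert_of_mem _ (Set.mem_insert_of_mem _ (Set.mem_insert_of_mem _ (Set.mem_insert_of_mem _ (Set.mem_insert_of_mem _ (Set.mem_insert _ _))))))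
  have h9 : e 9 ∈ S := hX _ (Set.mem_insert_of_mem _ (Set.mem_insert_of_mem _ (Set.mem_insert_of_mem _ (Set.mem_insert_of_mem _ (Set.mem_insert_of_mem _ (Set.mem_insert_of_mem _ (Set.mem_insert _ _)))))))
  have h19 : e 19 ∈ S := hX _ (Set.mem_insert_of_mem _ (Set.mem_insert_of_mem _ (Set.mem_insert_of_mem _ (Set.mem_insert_of_mem _ (Set.mem_insert_of_mem _ (Set.mem_insert_of_mem _ (Set.mem_insert_of_mem _ (Set.mem_insert _ _))))))))
  have h29 : e 29 ∈ S := hX _ (Set.mem_insert_of_mem _ (Set.mem_insert_of_mem _ (Set.mem_insert_of_mem _ (Set.mem_insert_of_mem _ (Set.mem_insert_of_mem _ (Set.mem_insert_of_mem _ (Set.mem_insert_of_mem _ (Set.mem_insert_of_mem _ (Set.mem_insert _ _)))))))))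
  have h10 : e 10 ∈ S := hX _ (Set.mem_insert_of_mem _ (Set.mem_insert_of_mem _ (Set.mem_insert_of_mem _ (Set.mem_insert_of_mem _ (Set.mem_insert_of_mem _ (Set.mem_insert_of_mem _ (Set.mem_insert_of_mem _ (Set.mem_insert_of_mem _ (Set.mem_insert_of_mem _ (Set.mem_insert _ _))))))))))
  have h4 : e 4 ∈ S := hX _ (Set.mem_insert_of_mem _ (Set.mem_insert_of_mem _ (Set.mem_insert_of_mem _ (Set.mem_insert_of_mem _ (Set.mem_insert_of_mem _ (Set.mem_insert_of_mem _ (Set.mem_insert_of_mem _ (Set.mem_insert_of_mem _ (Set.mem_insert_of_mem _ (Set.mem_insert_of_mem _ (Set.mem_insert _ _)))))))))))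
  have h7 : e 7 ∈ S := hX _ (Set.mem_insert_of_mem _ (Set.mem_insert_of_mem _ (Set.mem_insert_of_mem _ (Set.mem_insert_of_mem _ (Set.mem_insert_of_mem _ (Set.mem_insert_of_mem _ (Set.mem_insert_of_mem _ (Set.mem_insert_of_mem _ (Set.mem_insert_of_mem _ (Set.mem_insert_of_mem _ (Set.mem_insert_of_mem _ (Set.mem_insert _ _))))))))))))
  have h3 : e 3 ∈ S := by
    have h : e 3 = (e 4 + e 29 + e 3) + e 4 + e 29 := by decide
    rw [h]; exact add_mem (add_mem hd5 h4) h29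
  have h6 : e 6 ∈ S := by
    have h : e 6 = (e 7 + e 29 + e 6) + e 7 + e 29 := by decide
    rw [h]; exact add_mem (add_mem hd6 h7) h29
  have h5 : e 5 ∈ S := by
    have h : e 5 = (e 3 + e 5 + e 6) + e 3 + e 6 := by decide
    rw [h]; exact add_mem (add_mem hd2 h3) h6
  have h21 : e 21 ∈ S := by
    have h : e 21 = (e 10 + e 12 + e 13 + e 21 + e 29) + e 10 + (e 12 + e 13) + e 29 := by decide
    rw [h]; exact add_mem (add_mem (add_mem hg2 h10) hd4) h29
  have h0 : e 0 ∈ S := by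
    have h : e 0 = (e 21 + e 0) + e 21 := by decide
    rw [h]; exact add_mem hg6 h21
  have h8 : e 8 ∈ S := by
    have h : e 8 = (e 6 + e 8 + e 0) + e 6 + e 0 := by decide
    rw [h]; exact add_mem (add_mem hd3 h6) h0
  have h1 : e 1 ∈ S := by
    have h : e 1 = (e 1 + e 10) + e 10 := by decide
    rw [h]; exact add_mem hg4 h10
  have h2 : e 2 ∈ S := by
    have h : e 2 = (e 0 + e 2 + e 3 + e 11 + e 19) + e 0 + e 3 + (e 11 + e 19) := by decide
    rw [h]; exact add_mem (add_mem (add_mem hg1 h0) h3) hd1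
  fin_cases i <;>
    first
      | exact h0 | exact h1 | exact h2 | exact h3 | exact h4
      | exact h5 | exact h6 | exact h7 | exact h8 | exact h9
      | exact absurd hi (by decide)
end
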